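/- There exists a strictly positive function u : ℝ^N → (0, +∞), N ≥ 2, such that both u and -u are quasinearly subharmonic n.s. but u is not harmonic: namely u(0) = 2 and u(x) = 1 for x ≠ 0; then u is 2-quasinearly subharmonic n.s., -u is 1-quasinearly subharmonic n.s. (i.e., nearly subharmonic), and u is discontinuous at 0, hence not harmonic. -/

import Mathlib

open MeasureTheory Metric
open scoped ENNReal

noncomputable section

/-- `ℝ^N` as Euclidean space. -/
abbrev Euc (N : ℕ) := EuclideanSpace ℝ (Fin N)

/-- `ν_N`: the volume of the unit ball in `ℝ^N`. -/
noncomputable def unitBallVol (N : ℕ) : ℝ := (volume (ball (0 : Euc N) 1)).toReal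

/-- Positive part of an extended real, valued in `ℝ≥0∞`. -/
noncomputable def epos (x : EReal) : ℝ≥0∞ := if x = ⊤ then ⊤ else ENNReal.ofReal x.toReal

/-- The extended-real valued Lebesgue integral of `u` over `s`
(well defined whenever the positive part is integrable). -/
noncomputable def esetInt {N : ℕ} (u : Euc N → EReal) (s : Set (Euc N)) : EReal :=
  ((∫⁻ y in s, epos (u y)) : ℝ≥0∞) - ((∫⁻ y in s, epos (-(u y))) : ℝ≥0∞)

/-- The generalized sub-mean-value inequality
`u(x) ≤ K/(ν_N r^N) ∫_{B(x,r)} u dm_N` over all closed balls contained in `D`. -/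
def SubMeanIneq {N : ℕ} (K : ℝ) (D : Set (Euc N)) (u : Euc N → EReal) : Prop :=
  ∀ x r, 0 < r → closedBall x r ⊆ D →
    u x ≤ ((K / (unitBallVol N * r ^ N) : ℝ) : EReal) * esetInt u (ball x r)

/-- `u` is `K`-quasinearly subharmonic n.s. (in the narrow sense) on `D`:
`u` is measurable, `u⁺ ∈ L¹_loc(D)`, `u < +∞` and the sub-mean-value
inequality with constant `K` holds on all closed balls in `D`. -/
def QNSns {N : ℕ} (K : ℝ) (D : Set (Euc N)) (u : Euc N → EReal) : Prop :=
  1 ≤ K ∧ AEMeasurable u (volume.restrict D) ∧ (∀ x ∈ D, u x < ⊤) ∧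
  LocallyIntegrableOn (fun y => ((u y) ⊔ 0).toReal) D volume ∧
  SubMeanIneq K D u

/-- The family of inequalities (for every `M ≥ 0`, applied to `u_M = max (u, -M) + M`)
defining `K`-quasinearly subharmonic functions. -/
def QNSIneqFull {N : ℕ} (K : ℝ) (D : Set (Euc N)) (u : Euc N → EReal) : Prop :=
  ∀ M : ℝ, 0 ≤ M → ∀ x r, 0 < r → closedBall x r ⊆ D →
    (u x ⊔ ((-M : ℝ) : EReal)) + (M : EReal) ≤
      ((K / (unitBallVol N * r ^ N) : ℝ) : EReal) *
        ((∫⁻ y in ball x r, epos ((u y ⊔ ((-M : ℝ) : EReal)) + (M : EReal))) : ℝ≥0∞)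

/-- `u` is `K`-quasinearly subharmonic on `D`. -/
def QNSfull {N : ℕ} (K : ℝ) (D : Set (Euc N)) (u : Euc N → EReal) : Prop :=
  1 ≤ K ∧ AEMeasurable u (volume.restrict D) ∧ (∀ x ∈ D, u x < ⊤) ∧
  LocallyIntegrableOn (fun y => ((u y) ⊔ 0).toReal) D volume ∧
  QNSIneqFull K D u

/-- `u ∈ L¹_loc(D)` for an extended-real valued `u`. -/
def LocIntE {N : ℕ} (u : Euc N → EReal) (D : Set (Euc N)) : Prop :=
  ∀ k, k ⊆ D → IsCompact k → (∫⁻ y in k, epos (u y) + epos (-(u y))) < ⊤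

/-- The sub-mean-value inequality for real-valued functions. -/
def SubMeanIneqR {N : ℕ} (K : ℝ) (D : Set (Euc N)) (u : Euc N → ℝ) : Prop :=
  ∀ x r, 0 < r → closedBall x r ⊆ D →
    u x ≤ (K / (unitBallVol N * r ^ N)) * ∫ y in ball x r, u y

/-- The quasinearly subharmonicity inequalities (for every `M ≥ 0`,
applied to `u_M = max (u, -M) + M`) for real-valued functions. -/
def QNSIneqFullR {N : ℕ} (K : ℝ) (D : Set (Euc N)) (u : Euc N → ℝ) : Prop :=
  ∀ M : ℝ, 0 ≤ M → ∀ x r, 0 < r → closedBall x r ⊆ D →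
    max (u x) (-M) + M ≤
      (K / (unitBallVol N * r ^ N)) * ∫ y in ball x r, (max (u y) (-M) + M)

/-- `u : D → [-∞, +∞)` is harmonic on `D`: it is finite (real-valued) on `D`,
continuous on `D`, and satisfies the mean value equality on all closed balls in `D`. -/
def IsHarmonicOn {N : ℕ} (D : Set (Euc N)) (u : Euc N → EReal) : Prop :=
  (∀ x ∈ D, u x ≠ ⊥ ∧ u x ≠ ⊤) ∧ ContinuousOn (fun x => (u x).toReal) D ∧
  ∀ x r, 0 < r → closedBall x r ⊆ D →
    (u x).toReal = (1 / (unitBallVol N * r ^ N)) * ∫ y in ball x r, (u y).toReal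

end

/-! Once `N ≥ 1` the singleton `{0}` is Lebesgue-null, so `u` agrees a.e. with the constant `1`
and all its ball means equal `1`. This gives `u ≤ 2 · 1` and `-u ≤ -1`, while the mean value
equality fails at the centre `0`, where `u = 2`. -/

lemma ite_eq_ae_eq_const {α β : Type*} [MeasurableSpace α] [DecidableEq α] {μ : Measure α}
    [NullSingletonClass μ] (a : α) (b c : β) :
    (fun y => if y = a then b else c) =ᵐ[μ] fun _ => c :=
  (measure_eq_zero_iff_ae_notMem.mp (measure_singleton a)).mono fun _ hy => if_neg hy

lemma unitBallVol_pos (N : ℕ) : 0 < unitBallVol N :=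
  ENNReal.toReal_pos (measure_ball_pos _ _ one_pos).ne' measure_ball_lt_top.ne

lemma volume_ball_toReal {N : ℕ} (x : Euc N) {r : ℝ} (hr : 0 < r) :
    (volume (ball x r)).toReal = unitBallVol N * r ^ N := by
  rw [Measure.addHaar_ball_of_pos volume x hr, ENNReal.toReal_mul,
    ENNReal.toReal_ofReal (by positivity), finrank_euclideanSpace_fin, mul_comm, unitBallVol]

lemma integral_ball_of_ae_eq_const {N : ℕ} {f : Euc N → ℝ} {c : ℝ}
    (hf : f =ᵐ[volume] fun _ => c) (x : Euc N) {r : ℝ} (hr : 0 < r) :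
    ∫ y in ball x r, f y = unitBallVol N * r ^ N * c := by
  rw [integral_congr_ae (ae_restrict_of_ae hf), setIntegral_const, smul_eq_mul, measureReal_def,
    volume_ball_toReal x hr]

lemma div_mul_integral_ball_of_ae_eq_const {N : ℕ} {f : Euc N → ℝ} {c : ℝ}
    (hf : f =ᵐ[volume] fun _ => c) (K : ℝ) (x : Euc N) {r : ℝ} (hr : 0 < r) :
    K / (unitBallVol N * r ^ N) * ∫ y in ball x r, f y = K * c := by
  have := (unitBallVol_pos N).ne'
  rw [integral_ball_of_ae_eq_const hf x hr]
  field_simp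

lemma subMeanIneqR_of_ae_eq_const {N : ℕ} {K c : ℝ} {D : Set (Euc N)} {u : Euc N → ℝ}
    (hu : u =ᵐ[volume] fun _ => c) (hle : ∀ x ∈ D, u x ≤ K * c) : SubMeanIneqR K D u :=
  fun x r hr hD => by
    rw [div_mul_integral_ball_of_ae_eq_const hu K x hr]
    exact hle x (hD (mem_closedBall_self hr.le))

lemma not_forall_eq_ballMean_of_ae_eq_const {N : ℕ} {c : ℝ} {u : Euc N → ℝ}
    (hu : u =ᵐ[volume] fun _ => c) {x₀ : Euc N} (hx₀ : u x₀ ≠ c) :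
    ¬ ∀ (x : Euc N) (r : ℝ), 0 < r →
      u x = (1 / (unitBallVol N * r ^ N)) * ∫ y in ball x r, u y := fun h => by
  have := h x₀ 1 one_pos
  rw [div_mul_integral_ball_of_ae_eq_const hu 1 x₀ one_pos, one_mul] at this
  exact hx₀ this

/-- there is a strictly positive function `u` on `ℝ^N` such that
`u` is 2-quasinearly subharmonic n.s. and `-u` is 1-quasinearly subharmonic
n.s. (nearly subharmonic), yet `u` is not harmonic: `u(0) = 2`, `u(x) = 1`
for `x ≠ 0`. -/
theorem exists_positive_qnsns_both_not_harmonic {N : ℕ} (hN : 2 ≤ N) :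
    ∃ u : Euc N → ℝ,
      (∀ x, 0 < u x) ∧
      u 0 = 2 ∧ (∀ x : Euc N, x ≠ 0 → u x = 1) ∧
      Measurable u ∧
      SubMeanIneqR 2 (Set.univ : Set (Euc N)) u ∧
      SubMeanIneqR 1 (Set.univ : Set (Euc N)) (fun x => -(u x)) ∧
      ¬ (∀ (x : Euc N) (r : ℝ), 0 < r →
          u x = (1 / (unitBallVol N * r ^ N)) * ∫ y in ball x r, u y) := by
  classical
  have : Nontrivial (Euc N) := by
    have : Nonempty (Fin N) := ⟨⟨0, by omega⟩⟩
    infer_instance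
  set u : Euc N → ℝ := fun x => if x = 0 then 2 else 1
  have hu : u =ᵐ[volume] fun _ => 1 := ite_eq_ae_eq_const 0 2 1
  have hneg : (fun x => -u x) =ᵐ[volume] fun _ => -1 := hu.mono fun _ h => congrArg Neg.neg h
  have hu_bounds : ∀ x, 1 ≤ u x ∧ u x ≤ 2 := fun x => by dsimp only [u]; split_ifs <;> norm_num
  exact ⟨u, fun x => one_pos.trans_le (hu_bounds x).1, if_pos rfl, fun x hx => if_neg hx,
    measurable_const.ite (measurableSet_singleton 0) measurable_const,
    subMeanIneqR_of_ae_eq_const hu fun x _ => by linarith [hu_bounds x],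
    subMeanIneqR_of_ae_eq_const hneg fun x _ => by linarith [hu_bounds x],
    not_forall_eq_ballMean_of_ae_eq_const hu (x₀ := 0) (by norm_num [u])⟩
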